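/- Let L̃ be a (Ψ,C) weighted dependency graph for a family {Y_α, α ∈ A} of random variables (A finite), and let A₁,…,A_r be subsets of A. With R = Σ_{α∈A} Ψ({α}) and T_ℓ = max_{α₁,…,α_ℓ∈A} Σ_{β∈A} W({β},{α₁,…,α_ℓ}) Ψ({α₁,…,α_ℓ,β})/Ψ({α₁,…,α_ℓ}), one has |κ(Σ_{α∈A₁} Y_α, …, Σ_{α∈A_r} Y_α)| ≤ C_r · r! · R · T₁ ⋯ T_{r−1}. -/

import Mathlib

/-!
By multilinearity the cumulant of the sums is the sum, over tuples `b ∈ A₁ × ⋯ × A_r`, of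
`κ(Y_{b 0}, …, Y_{b (r-1)})`, each bounded by `C_r Ψ(b) M(L̃[b])`. Ordering the vertices of a
spanning tree of `L̃[b]` by their distance to a root, every vertex but the first is joined by a
tree edge to an earlier one; as edge weights are at most `1`, the weight of the tree is at most
`∏_{j ≥ 1} W({b (σ j)}, {b (σ 0), …, b (σ (j-1))})` for some permutation `σ`, and summing over
all `σ` costs the factor `r!`. The remaining sum over tuples is peeled off one last coordinate at
a time: appending `β` to a tuple `a` multiplies `Ψ(a)` by `Ψ(a + β) / Ψ(a)` and the chain weight
by `W({β}, a)`, and summing over `β` costs at most `T_ℓ`.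
-/

open MeasureTheory ProbabilityTheory Filter

noncomputable section

namespace WDGpaper

/-- The joint cumulant of a finite family of real random variables, defined through
the moment-cumulant formula over set partitions. -/
noncomputable def jointCumulant {Ω : Type*} [MeasurableSpace Ω] (μ : Measure Ω)
    {r : ℕ} (X : Fin r → Ω → ℝ) : ℝ :=
  ∑ π : Finpartition (Finset.univ : Finset (Fin r)),
    (-1 : ℝ) ^ (π.parts.card - 1) * (Nat.factorial (π.parts.card - 1) : ℝ) *
      ∏ B ∈ π.parts, ∫ ω, ∏ i ∈ B, X i ω ∂μ

/-- Symmetrized weight function on unordered pairs, from a function on ordered pairs. -/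
noncomputable def edgeWeight {V : Type*} (w : V → V → ℝ) : Sym2 V → ℝ :=
  Sym2.lift ⟨fun a b => max (w a b) (w b a), fun _ _ => max_comm _ _⟩

/-- `T` is (the edge set of) a spanning tree of the complete graph on `V`. -/
def IsSpanningTree (V : Type*) [Fintype V] [DecidableEq V] (T : Finset (Sym2 V)) : Prop :=
  (∀ e ∈ T, ¬ e.IsDiag) ∧ (SimpleGraph.fromEdgeSet (↑T : Set (Sym2 V))).Connected ∧
    T.card + 1 = Fintype.card V

/-- The maximal weight (product of edge weights) of a spanning tree of the weighted
graph with vertex set `V` and weight function `w`; it equals `0` (the `sSup` of the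
empty set) when the weighted graph has no spanning tree, i.e. is disconnected. -/
noncomputable def treeMax {V : Type*} [Fintype V] [DecidableEq V] (w : V → V → ℝ) : ℝ :=
  sSup {x : ℝ | ∃ T : Finset (Sym2 V), IsSpanningTree V T ∧ x = ∏ e ∈ T, edgeWeight w e}

/-- The weight function of the weighted graph induced (on the multiset of vertices
`{f x : x : β}`, counted with multiplicity) by the weighted graph `w` on `A`:
two copies of the same vertex are linked by weight `1`, and otherwise the weight of
the corresponding edge of `w` is used. -/
noncomputable def inducedW {A β : Type*} [DecidableEq A] (w : A → A → ℝ) (f : β → A) :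
    β → β → ℝ :=
  fun x y => if f x = f y then 1 else w (f x) (f y)

/-- `W({β}, {a 0, …, a (ℓ-1)})`: maximal weight of an edge joining `β` to one of the
`a i`, with the convention that it is `1` if `β` is one of the `a i`,
and `0` (empty `sSup`) if `ℓ = 0`. -/
noncomputable def Wpt {A : Type*} [DecidableEq A] (w : A → A → ℝ) (β : A) {ℓ : ℕ}
    (a : Fin ℓ → A) : ℝ :=
  sSup {x : ℝ | ∃ i : Fin ℓ, x = if β = a i then 1 else w β (a i)}

/-- `w` is a `(Ψ, C)` weighted dependency graph for the family `Y`: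
for every multiset `B = {b 0, …, b (r-1)}` of elements of `A` (`r ≥ 1`), the joint
cumulant of the corresponding variables is bounded by `C r * Ψ B * M(L̃[B])`. -/
def IsWDG {Ω : Type*} [MeasurableSpace Ω] (μ : Measure Ω) {A : Type*} [DecidableEq A]
    (Y : A → Ω → ℝ) (w : A → A → ℝ) (Ψ : Multiset A → ℝ) (C : ℕ → ℝ) : Prop :=
  ∀ r : ℕ, 1 ≤ r → ∀ b : Fin r → A,
    |jointCumulant μ fun i => Y (b i)| ≤
      C r * Ψ (List.ofFn b : Multiset A) * treeMax (inducedW w b)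

end WDGpaper

open WDGpaper

open Finset

theorem Fin.take_snoc_of_le {α : Type*} {n m : ℕ} (h : m ≤ n) {h' : m ≤ n + 1}
    (a : Fin n → α) (β : α) :
    Fin.take m h' (Fin.snoc a β : Fin (n + 1) → α) = Fin.take m h a := by
  rw [← Fin.take_init, Fin.init_snoc]

theorem Multiset.coe_ofFn_snoc {α : Type*} {n : ℕ} (f : Fin n → α) (a : α) :
    (List.ofFn (Fin.snoc f a : Fin (n + 1) → α) : Multiset α) = List.ofFn f + {a} := by
  simp only [List.ofFn_succ', Fin.snoc_castSucc, Fin.snoc_last, List.concat_eq_append,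
    ← Multiset.coe_add]
  rfl

theorem Multiset.coe_ofFn_comp_perm {α : Type*} {n : ℕ} (σ : Equiv.Perm (Fin n))
    (f : Fin n → α) : (List.ofFn (f ∘ σ) : Multiset α) = List.ofFn f :=
  Multiset.coe_eq_coe.2 (σ.ofFn_comp_perm f)

theorem Finpartition.prod_sum_piFinset_eq_sum_prod {ι α R : Type*} [Fintype ι] [DecidableEq ι]
    [DecidableEq α] [CommSemiring R] (P : Finpartition (univ : Finset ι)) (S : ι → Finset α)
    (g : (B : Finset ι) → (B → α) → R) :
    ∏ B ∈ P.parts, ∑ c ∈ Fintype.piFinset (fun i : B => S i), g B c =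
      ∑ b ∈ Fintype.piFinset S, ∏ B ∈ P.parts, g B (fun i => b i) := by
  rw [← prod_coe_sort P.parts, prod_univ_sum]
  symm
  refine sum_equiv (((Equiv.subtypeUnivEquiv mem_univ).symm.arrowCongr (Equiv.refl α)).trans
    ((P.equivSigmaParts.arrowCongr (Equiv.refl α)).trans (Equiv.piCurry fun _ _ => α)))
    (fun b => ?_) (fun b _ => (prod_coe_sort P.parts fun B => g B fun i => b i).symm)
  simp only [Fintype.mem_piFinset]
  exact ⟨fun h B i => h i, fun h i =>
    h ⟨P.part i, P.part_mem.2 (mem_univ i)⟩ ⟨i, P.mem_part (mem_univ i)⟩⟩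

theorem SimpleGraph.Connected.exists_perm_exists_lt_adj {n : ℕ} {G : SimpleGraph (Fin n)}
    (hG : G.Connected) :
    ∃ σ : Equiv.Perm (Fin n), ∀ j : Fin n, (j : ℕ) ≠ 0 → ∃ i < j, G.Adj (σ i) (σ j) := by
  obtain ⟨z⟩ := hG.nonempty
  let d : Fin n → ℕ := G.dist z
  have hmono : Monotone (d ∘ Tuple.sort d) := Tuple.monotone_sort d
  refine ⟨Tuple.sort d, fun j hj => ?_⟩
  set σ := Tuple.sort d
  have hσj : σ j ≠ z := by
    intro h
    have h0 : d (σ ⟨0, j.pos⟩) ≤ d (σ j) := hmono (Fin.mk_le_of_le_val (Nat.zero_le _))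
    simp only [d, h, SimpleGraph.dist_self, nonpos_iff_eq_zero, hG.dist_eq_zero_iff] at h0
    exact hj (congrArg Fin.val (σ.injective (h0.symm.trans h.symm))).symm
  obtain ⟨p, hp⟩ := (hG.preconnected (σ j) z).exists_walk_length_eq_dist
  obtain ⟨y, hadj, q, rfl⟩ := p.exists_eq_cons_of_ne hσj
  have hlt : d y < d (σ j) := by
    simp only [d, SimpleGraph.dist_comm (u := z), ← hp, SimpleGraph.Walk.length_cons]
    exact Nat.lt_succ_of_le (SimpleGraph.dist_le q)
  refine ⟨σ.symm y, ?_, by simpa using hadj.symm⟩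
  by_contra! h
  have := hmono h
  simp only [Function.comp_apply, Equiv.apply_symm_apply] at this
  omega

section Multilinearity

variable {Ω A : Type*} [MeasurableSpace Ω] {μ : Measure Ω} {Y : A → Ω → ℝ}

theorem integrable_prod_of_integrable_prod_fin
    (hint : ∀ (k : ℕ) (b : Fin k → A), Integrable (fun ω => ∏ i, Y (b i) ω) μ)
    {ι : Type*} [Fintype ι] (c : ι → A) : Integrable (fun ω => ∏ i, Y (c i) ω) μ := by
  let e := Fintype.equivFin ι
  convert hint _ (c ∘ e.symm) using 2 with ω
  exact (e.symm.prod_comp fun i => Y (c i) ω).symm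

theorem integral_prod_sum_eq_sum_integral
    (hint : ∀ (k : ℕ) (b : Fin k → A), Integrable (fun ω => ∏ i, Y (b i) ω) μ)
    {ι : Type*} [DecidableEq ι] (S : ι → Finset A) (B : Finset ι) :
    ∫ ω, ∏ i ∈ B, ∑ α ∈ S i, Y α ω ∂μ =
      ∑ c ∈ Fintype.piFinset (fun i : B => S i), ∫ ω, ∏ i, Y (c i) ω ∂μ := by
  simp_rw [← prod_coe_sort B, prod_univ_sum]
  exact integral_finsetSum _ fun c _ => integrable_prod_of_integrable_prod_fin hint c

theorem jointCumulant_sum_eq_sum_jointCumulant [DecidableEq A]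
    (hint : ∀ (k : ℕ) (b : Fin k → A), Integrable (fun ω => ∏ i, Y (b i) ω) μ)
    {r : ℕ} (S : Fin r → Finset A) :
    jointCumulant μ (fun i ω => ∑ α ∈ S i, Y α ω) =
      ∑ b ∈ Fintype.piFinset S, jointCumulant μ (fun i => Y (b i)) := by
  simp only [jointCumulant, integral_prod_sum_eq_sum_integral hint,
    Finpartition.prod_sum_piFinset_eq_sum_prod, mul_sum]
  rw [sum_comm]
  congr! 6 with b _ π _ B _ ω
  exact prod_coe_sort B fun i => Y (b i) ω

end Multilinearity

section Weights

variable {A : Type*} [DecidableEq A] {w : A → A → ℝ}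

theorem le_Wpt (β : A) {ℓ : ℕ} (a : Fin ℓ → A) (i : Fin ℓ) :
    (if β = a i then 1 else w β (a i)) ≤ Wpt w β a := by
  refine le_csSup ((Set.finite_range fun i => if β = a i then (1 : ℝ) else w β (a i)).bddAbove.mono
    ?_) ⟨i, rfl⟩
  rintro _ ⟨i, rfl⟩
  exact ⟨i, rfl⟩

theorem Wpt_nonneg (hw0 : ∀ a b, 0 ≤ w a b) (β : A) {ℓ : ℕ} (a : Fin ℓ → A) :
    0 ≤ Wpt w β a := by
  refine Real.sSup_nonneg ?_
  rintro _ ⟨i, rfl⟩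
  split_ifs
  exacts [zero_le_one, hw0 _ _]

theorem inducedW_comm (hsym : ∀ a b, w a b = w b a) {β : Type*} (f : β → A) (x y : β) :
    inducedW w f x y = inducedW w f y x := by
  simp only [inducedW, eq_comm (a := f x), hsym (f x)]

theorem inducedW_nonneg (hw0 : ∀ a b, 0 ≤ w a b) {β : Type*} (f : β → A) (x y : β) :
    0 ≤ inducedW w f x y := by
  unfold inducedW
  split_ifs
  exacts [zero_le_one, hw0 _ _]

theorem inducedW_le_one (hw1 : ∀ a b, w a b ≤ 1) {β : Type*} (f : β → A) (x y : β) :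
    inducedW w f x y ≤ 1 := by
  unfold inducedW
  split_ifs
  exacts [le_rfl, hw1 _ _]

theorem edgeWeight_inducedW_mk (hsym : ∀ a b, w a b = w b a) {β : Type*} (f : β → A)
    (x y : β) : edgeWeight (inducedW w f) s(x, y) = inducedW w f x y :=
  max_eq_left (inducedW_comm hsym f x y).ge

theorem edgeWeight_inducedW_nonneg (hw0 : ∀ a b, 0 ≤ w a b) {β : Type*} (f : β → A)
    (e : Sym2 β) : 0 ≤ edgeWeight (inducedW w f) e := by
  induction e using Sym2.ind with
  | _ x y => exact (inducedW_nonneg hw0 f x y).trans (le_max_left _ _)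

theorem edgeWeight_inducedW_le_one (hw1 : ∀ a b, w a b ≤ 1) {β : Type*} (f : β → A)
    (e : Sym2 β) : edgeWeight (inducedW w f) e ≤ 1 := by
  induction e using Sym2.ind with
  | _ x y => exact max_le (inducedW_le_one hw1 f x y) (inducedW_le_one hw1 f y x)

theorem treeMax_inducedW_nonneg (hw0 : ∀ a b, 0 ≤ w a b) {β : Type*} [Fintype β]
    [DecidableEq β] (f : β → A) : 0 ≤ treeMax (inducedW w f) := by
  refine Real.sSup_nonneg ?_
  rintro _ ⟨T, -, rfl⟩
  exact prod_nonneg fun e _ => edgeWeight_inducedW_nonneg hw0 f e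

end Weights

section Chains

variable {A : Type*} [DecidableEq A] {w : A → A → ℝ}

def chainWeight (w : A → A → ℝ) {r : ℕ} (a : Fin r → A) : ℝ :=
  ∏ j ∈ univ.filter (fun j : Fin r => (j : ℕ) ≠ 0), Wpt w (a j) (Fin.take j j.isLt.le a)

theorem chainWeight_nonneg (hw0 : ∀ a b, 0 ≤ w a b) {r : ℕ} (a : Fin r → A) :
    0 ≤ chainWeight w a :=
  prod_nonneg fun _ _ => Wpt_nonneg hw0 _ _

theorem chainWeight_fin_one (a : Fin 1 → A) : chainWeight w a = 1 := by
  simp [chainWeight]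

theorem chainWeight_snoc {n : ℕ} (hn : n ≠ 0) (a : Fin n → A) (β : A) :
    chainWeight w (Fin.snoc a β : Fin (n + 1) → A) = chainWeight w a * Wpt w β a := by
  unfold chainWeight
  rw [prod_filter, prod_filter, Fin.prod_univ_castSucc]
  simp only [Fin.val_castSucc, Fin.val_last, Fin.snoc_castSucc, Fin.snoc_last, if_pos hn]
  congr 1
  · exact prod_congr rfl fun j _ => by rw [Fin.take_snoc_of_le j.isLt.le]
  · rw [Fin.take_snoc_of_le le_rfl, Fin.take_eq_self]

theorem prod_edgeWeight_le_chainWeight (hsym : ∀ a b, w a b = w b a)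
    (hw0 : ∀ a b, 0 ≤ w a b) (hw1 : ∀ a b, w a b ≤ 1) {r : ℕ} (b : Fin r → A)
    {T : Finset (Sym2 (Fin r))} {σ : Equiv.Perm (Fin r)}
    (hσ : ∀ j : Fin r, (j : ℕ) ≠ 0 → ∃ i < j, s(σ i, σ j) ∈ T) :
    ∏ e ∈ T, edgeWeight (inducedW w b) e ≤ chainWeight w (b ∘ σ) := by
  choose! I hI using hσ
  set J := univ.filter (fun j : Fin r => (j : ℕ) ≠ 0)
  have hJ : ∀ j ∈ J, (j : ℕ) ≠ 0 := fun j hj => (mem_filter.1 hj).2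
  have hinj : Set.InjOn (fun j => s(σ (I j), σ j)) J := by
    intro j hj j' hj' h
    rcases Sym2.eq_iff.1 h with ⟨-, h⟩ | ⟨h, h'⟩
    · exact σ.injective h
    · have := (hI j (hJ j hj)).1
      have := (hI j' (hJ j' hj')).1
      rw [σ.injective h] at *
      rw [← σ.injective h'] at *
      omega
  calc ∏ e ∈ T, edgeWeight (inducedW w b) e
      ≤ ∏ e ∈ J.image fun j => s(σ (I j), σ j), edgeWeight (inducedW w b) e := by
        refine prod_le_prod_of_subset_of_le_one ?_ (fun e _ => edgeWeight_inducedW_nonneg hw0 b e)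
          fun e _ _ => edgeWeight_inducedW_le_one hw1 b e
        intro e he
        obtain ⟨j, hj, rfl⟩ := mem_image.1 he
        exact (hI j (hJ j hj)).2
    _ = ∏ j ∈ J, inducedW w b (σ j) (σ (I j)) := by
        rw [prod_image hinj]
        exact prod_congr rfl fun j _ => by rw [edgeWeight_inducedW_mk hsym, inducedW_comm hsym]
    _ ≤ chainWeight w (b ∘ σ) := by
        refine prod_le_prod (fun j _ => inducedW_nonneg hw0 b _ _) fun j hj => ?_
        exact le_Wpt (b (σ j)) (Fin.take j j.isLt.le (b ∘ σ)) ⟨I j, (hI j (hJ j hj)).1⟩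

theorem treeMax_inducedW_le_sum_chainWeight (hsym : ∀ a b, w a b = w b a)
    (hw0 : ∀ a b, 0 ≤ w a b) (hw1 : ∀ a b, w a b ≤ 1) {r : ℕ} (b : Fin r → A) :
    treeMax (inducedW w b) ≤ ∑ σ : Equiv.Perm (Fin r), chainWeight w (b ∘ σ) := by
  refine Real.sSup_le ?_ (sum_nonneg fun σ _ => chainWeight_nonneg hw0 _)
  rintro _ ⟨T, ⟨-, hconn, -⟩, rfl⟩
  obtain ⟨σ, hσ⟩ := hconn.exists_perm_exists_lt_adj
  refine (prod_edgeWeight_le_chainWeight hsym hw0 hw1 b fun j hj => ?_).trans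
    (single_le_sum (fun (τ : Equiv.Perm (Fin r)) _ => chainWeight_nonneg hw0 (b ∘ τ))
      (mem_univ σ))
  obtain ⟨i, hij, hadj⟩ := hσ j hj
  exact ⟨i, hij, ((SimpleGraph.fromEdgeSet_adj _).1 hadj).1⟩

end Chains

section Extension

variable {A : Type*} [Fintype A] [DecidableEq A] {w : A → A → ℝ} {Ψ : Multiset A → ℝ}

def extensionSum (w : A → A → ℝ) (Ψ : Multiset A → ℝ) {ℓ : ℕ}
    (a : Fin ℓ → A) : ℝ :=
  ∑ β : A, Wpt w β a * (Ψ ((List.ofFn a : Multiset A) + {β}) / Ψ (List.ofFn a : Multiset A))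

/-- The constant `T_ℓ` of the paper. -/
def extensionBound (w : A → A → ℝ) (Ψ : Multiset A → ℝ) (ℓ : ℕ) : ℝ :=
  ⨆ a : Fin ℓ → A, extensionSum w Ψ a

theorem extensionSum_le_extensionBound {ℓ : ℕ} (a : Fin ℓ → A) :
    extensionSum w Ψ a ≤ extensionBound w Ψ ℓ :=
  le_ciSup (Finite.bddAbove_range _) a

theorem extensionBound_nonneg (hw0 : ∀ a b, 0 ≤ w a b) (hΨ : ∀ B, 0 ≤ Ψ B) (ℓ : ℕ) :
    0 ≤ extensionBound w Ψ ℓ :=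
  Real.iSup_nonneg fun a => sum_nonneg fun β _ =>
    mul_nonneg (Wpt_nonneg hw0 β a) (div_nonneg (hΨ _) (hΨ _))

theorem sum_snoc_mul_chainWeight_le (hw0 : ∀ a b, 0 ≤ w a b) (hΨ : ∀ B, 0 < Ψ B) {n : ℕ}
    (hn : n ≠ 0) (a : Fin n → A) :
    ∑ β : A, Ψ (List.ofFn (Fin.snoc a β : Fin (n + 1) → A) : Multiset A) *
        chainWeight w (Fin.snoc a β : Fin (n + 1) → A) ≤
      Ψ (List.ofFn a : Multiset A) * chainWeight w a * extensionBound w Ψ n := by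
  have hΨa := hΨ (List.ofFn a : Multiset A)
  calc _ = Ψ (List.ofFn a : Multiset A) * chainWeight w a * extensionSum w Ψ a := by
        rw [extensionSum, mul_sum]
        refine sum_congr rfl fun β _ => ?_
        rw [Multiset.coe_ofFn_snoc, chainWeight_snoc hn]
        field_simp
    _ ≤ _ := mul_le_mul_of_nonneg_left (extensionSum_le_extensionBound a)
        (mul_nonneg hΨa.le (chainWeight_nonneg hw0 a))

theorem sum_mul_chainWeight_le (hw0 : ∀ a b, 0 ≤ w a b) (hΨ : ∀ B, 0 < Ψ B) {r : ℕ}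
    (hr : 1 ≤ r) :
    ∑ a : Fin r → A, Ψ (List.ofFn a : Multiset A) * chainWeight w a ≤
      (∑ α : A, Ψ {α}) * ∏ ℓ ∈ Ico 1 r, extensionBound w Ψ ℓ := by
  induction r, hr using Nat.le_induction with
  | base =>
    rw [Ico_self, prod_empty, mul_one]
    refine (Fintype.sum_equiv (Equiv.funUnique (Fin 1) A) _ (fun α => Ψ {α}) fun a => ?_).le
    simp [chainWeight_fin_one, List.ofFn_succ]
  | succ n hn ih =>
    calc _ = ∑ a : Fin n → A, ∑ β : A,
          Ψ (List.ofFn (Fin.snoc a β : Fin (n + 1) → A) : Multiset A) *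
            chainWeight w (Fin.snoc a β : Fin (n + 1) → A) := by
          rw [← (Fin.snocEquiv fun _ => A).sum_comp, Fintype.sum_prod_type, sum_comm]
          rfl
      _ ≤ ∑ a : Fin n → A,
          Ψ (List.ofFn a : Multiset A) * chainWeight w a * extensionBound w Ψ n :=
          sum_le_sum fun a _ => sum_snoc_mul_chainWeight_le hw0 hΨ (by omega) a
      _ ≤ (∑ α : A, Ψ {α}) * (∏ ℓ ∈ Ico 1 n, extensionBound w Ψ ℓ) * extensionBound w Ψ n := by
          rw [← sum_mul]
          exact mul_le_mul_of_nonneg_right ih (extensionBound_nonneg hw0 (fun B => (hΨ B).le) n)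
      _ = _ := by rw [prod_Ico_succ_top hn, mul_assoc]

theorem sum_mul_treeMax_inducedW_le (hsym : ∀ a b, w a b = w b a) (hw0 : ∀ a b, 0 ≤ w a b)
    (hw1 : ∀ a b, w a b ≤ 1) (hΨ : ∀ B, 0 ≤ Ψ B) (r : ℕ) :
    ∑ b : Fin r → A, Ψ (List.ofFn b : Multiset A) * treeMax (inducedW w b) ≤
      r.factorial * ∑ a : Fin r → A, Ψ (List.ofFn a : Multiset A) * chainWeight w a := by
  calc _ ≤ ∑ b : Fin r → A, ∑ σ : Equiv.Perm (Fin r),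
        Ψ (List.ofFn (b ∘ σ) : Multiset A) * chainWeight w (b ∘ σ) := by
        refine sum_le_sum fun b _ => ?_
        simp only [Multiset.coe_ofFn_comp_perm, ← mul_sum]
        exact mul_le_mul_of_nonneg_left (treeMax_inducedW_le_sum_chainWeight hsym hw0 hw1 b)
          (hΨ _)
    _ = ∑ _σ : Equiv.Perm (Fin r), ∑ a : Fin r → A,
        Ψ (List.ofFn a : Multiset A) * chainWeight w a := by
        rw [sum_comm]
        exact sum_congr rfl fun σ _ =>
          Fintype.sum_equiv (σ.symm.arrowCongr (Equiv.refl A)) _ _ fun b => rfl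
    _ = _ := by rw [sum_const, card_univ, Fintype.card_perm, Fintype.card_fin, nsmul_eq_mul]

end Extension

theorem jointCumulant_sums_le_of_isWDG_general
    {Ω : Type*} [MeasurableSpace Ω] (μ : Measure Ω)
    {A : Type*} [Fintype A] [DecidableEq A]
    (Y : A → Ω → ℝ)
    (hint : ∀ (k : ℕ) (b : Fin k → A), Integrable (fun ω => ∏ i, Y (b i) ω) μ)
    (w : A → A → ℝ) (hsym : ∀ a b, w a b = w b a)
    (hw0 : ∀ a b, 0 ≤ w a b) (hw1 : ∀ a b, w a b ≤ 1)
    (Ψ : Multiset A → ℝ) (hΨ : ∀ B, 0 < Ψ B)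
    (C : ℕ → ℝ) (hC : ∀ k, 0 < C k)
    (hWDG : IsWDG μ Y w Ψ C)
    (R : ℝ) (hR : R = ∑ α : A, Ψ {α})
    (T : ℕ → ℝ)
    (hT : ∀ ℓ : ℕ, 1 ≤ ℓ → T ℓ = ⨆ a : Fin ℓ → A, ∑ β : A,
        Wpt w β a * (Ψ ((List.ofFn a : Multiset A) + {β}) / Ψ (List.ofFn a : Multiset A)))
    (r : ℕ) (hr : 1 ≤ r) (S : Fin r → Finset A) :
    |jointCumulant μ (fun i : Fin r => fun ω => ∑ α ∈ S i, Y α ω)| ≤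
      C r * (Nat.factorial r : ℝ) * R * ∏ ℓ ∈ Finset.Ico 1 r, T ℓ := by
  have hTprod : ∏ ℓ ∈ Ico 1 r, T ℓ = ∏ ℓ ∈ Ico 1 r, extensionBound w Ψ ℓ :=
    prod_congr rfl fun ℓ hℓ => hT ℓ (mem_Ico.1 hℓ).1
  have hΨ0 : ∀ B, 0 ≤ Ψ B := fun B => (hΨ B).le
  rw [jointCumulant_sum_eq_sum_jointCumulant hint, hTprod, hR]
  calc |∑ b ∈ Fintype.piFinset S, jointCumulant μ fun i => Y (b i)|
      ≤ ∑ b ∈ Fintype.piFinset S, |jointCumulant μ fun i => Y (b i)| := abs_sum_le_sum_abs _ _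
    _ ≤ ∑ b : Fin r → A, C r * (Ψ (List.ofFn b : Multiset A) * treeMax (inducedW w b)) := by
        refine (sum_le_sum fun b _ => (hWDG r hr b).trans_eq (mul_assoc _ _ _)).trans <|
          sum_le_sum_of_subset_of_nonneg (subset_univ _) fun b _ _ => ?_
        exact mul_nonneg (hC r).le (mul_nonneg (hΨ0 _) (treeMax_inducedW_nonneg hw0 b))
    _ ≤ C r * (r.factorial * ∑ a : Fin r → A, Ψ (List.ofFn a : Multiset A) * chainWeight w a) := by
        rw [← mul_sum]
        exact mul_le_mul_of_nonneg_left (sum_mul_treeMax_inducedW_le hsym hw0 hw1 hΨ0 r) (hC r).le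
    _ ≤ C r * (r.factorial * ((∑ α : A, Ψ {α}) * ∏ ℓ ∈ Ico 1 r, extensionBound w Ψ ℓ)) := by
        gcongr
        exacts [(hC r).le, sum_mul_chainWeight_le hw0 hΨ hr]
    _ = _ := by ring

/-- Bound on the joint cumulants of sums over subsets `S 0, …, S (r-1)`
of the index set of a family admitting a `(Ψ, C)` weighted dependency graph:
`|κ(Σ_{α∈A₁} Y_α, …, Σ_{α∈A_r} Y_α)| ≤ C_r · r! · R · T₁ ⋯ T_{r-1}`. -/
theorem jointCumulant_sums_le_of_isWDG
    {Ω : Type*} [MeasurableSpace Ω] (μ : Measure Ω) [IsProbabilityMeasure μ]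
    {A : Type*} [Fintype A] [DecidableEq A] [Nonempty A]
    (Y : A → Ω → ℝ)
    (hint : ∀ (k : ℕ) (b : Fin k → A), Integrable (fun ω => ∏ i, Y (b i) ω) μ)
    (w : A → A → ℝ) (hsym : ∀ a b, w a b = w b a)
    (hw0 : ∀ a b, 0 ≤ w a b) (hw1 : ∀ a b, w a b ≤ 1)
    (Ψ : Multiset A → ℝ) (hΨ : ∀ B, 0 < Ψ B)
    (C : ℕ → ℝ) (hC : ∀ k, 0 < C k)
    (hWDG : IsWDG μ Y w Ψ C)
    (R : ℝ) (hR : R = ∑ α : A, Ψ {α})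
    (T : ℕ → ℝ)
    (hT : ∀ ℓ : ℕ, 1 ≤ ℓ → T ℓ = ⨆ a : Fin ℓ → A, ∑ β : A,
        Wpt w β a * (Ψ ((List.ofFn a : Multiset A) + {β}) / Ψ (List.ofFn a : Multiset A)))
    (r : ℕ) (hr : 1 ≤ r) (S : Fin r → Finset A) :
    |jointCumulant μ (fun i : Fin r => fun ω => ∑ α ∈ S i, Y α ω)| ≤
      C r * (Nat.factorial r : ℝ) * R * ∏ ℓ ∈ Finset.Ico 1 r, T ℓ :=
  jointCumulant_sums_le_of_isWDG_general μ Y hint w hsym hw0 hw1 Ψ hΨ C hC hWDG R hR T hT r hr S
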